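/- arXiv:1309.6510 — 3 statements merged into one kernel-verified Lean document; each statement's English description precedes it below -/
import Mathlib

section
/- Let x̃ be a nonzero integer and x = x̃([1̄] − [0̄]) ∈ R = ℤ[ℤ/fℤ]. Then the quotient K/xR of the augmentation ideal K by the ideal xR = {xy : y ∈ R} is isomorphic, as a module over ℤ[ℤ/fℤ], to (ℤ/x̃ℤ) ⊗_ℤ K, where the ℤ/fℤ-action on the tensor product is induced by the action on the factor K. -/
open TensorProduct

/-- The basis element `[k̄]` of the integral group ring `ℤ[ℤ/fℤ]`. -/
noncomputable def bas (f : ℕ) (k : ZMod f) : MonoidAlgebra ℤ (Multiplicative (ZMod f)) :=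
  MonoidAlgebra.of ℤ (Multiplicative (ZMod f)) (Multiplicative.ofAdd k)

/-- The augmentation `ε : ℤ[ℤ/fℤ] → ℤ` as a ring homomorphism. -/
noncomputable def aug (f : ℕ) : MonoidAlgebra ℤ (Multiplicative (ZMod f)) →ₐ[ℤ] ℤ :=
  MonoidAlgebra.lift ℤ ℤ (Multiplicative (ZMod f)) 1

/-- The augmentation ideal `K = ker ε` of `ℤ[ℤ/fℤ]`, as an ideal (hence an
`ℤ[ℤ/fℤ]`-module, the action being by multiplication). -/
noncomputable def augIdeal (f : ℕ) : Ideal (MonoidAlgebra ℤ (Multiplicative (ZMod f))) :=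
  RingHom.ker (aug f).toRingHom

/-! Since `ℤ/fℤ` is cyclic, the augmentation ideal is principal, `K = gR` with `g = [1̄] − [0̄]`.
Hence `K ∩ xR = x̃ • gR = x̃K`, so `K/xR = K/x̃K`, and `k ↦ k ⊗ 1` identifies `K/x̃K` with
`K ⊗ ℤ/x̃ℤ`; this map is `ℤ[ℤ/fℤ]`-linear because the group ring acts on the factor `K` only. -/

open Pointwise

namespace MonoidAlgebra
variable {k G : Type*} [CommRing k]

theorem ker_lift_one_le_span_of_sub_one [Monoid G] :
    RingHom.ker (lift k k G 1) ≤ Ideal.span (Set.range fun g : G => of k G g - 1) := by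
  have sub_mem (x : MonoidAlgebra k G) :
      x - algebraMap k _ (lift k k G 1 x) ∈ Ideal.span (Set.range fun g : G => of k G g - 1) := by
    induction x using MonoidAlgebra.induction_on with
    | of g =>
      rw [lift_of, MonoidHom.one_apply, map_one]
      exact Ideal.subset_span ⟨g, rfl⟩
    | add x y hx hy => simpa only [map_add, add_sub_add_comm] using add_mem hx hy
    | smul r x hx =>
      rw [map_smul, smul_eq_mul, map_mul, ← Algebra.smul_def, ← smul_sub]
      exact Submodule.smul_of_tower_mem _ r hx
  intro x hx
  simpa [(RingHom.mem_ker).1 hx] using sub_mem x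

theorem of_zpow_sub_one_mem_span [Group G] (s : G) (m : ℤ) :
    of k G (s ^ m) - 1 ∈ Ideal.span {of k G s - 1} := by
  have hs : of k G s - 1 ∈ Ideal.span {of k G s - 1} := Ideal.mem_span_singleton_self _
  induction m using Int.induction_on with
  | zero => simp only [zpow_zero, map_one, sub_self, zero_mem]
  | succ m ih =>
    have : of k G (s ^ ((m : ℤ) + 1)) - 1 =
        of k G (s ^ (m : ℤ)) * (of k G s - 1) + (of k G (s ^ (m : ℤ)) - 1) := by
      rw [zpow_add_one, map_mul]; noncomm_ring
    rw [this]; exact add_mem (Ideal.mul_mem_left _ _ hs) ih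
  | pred m ih =>
    have : of k G (s ^ (-(m : ℤ) - 1)) - 1 =
        (of k G (s ^ (-(m : ℤ))) - 1) - of k G (s ^ (-(m : ℤ) - 1)) * (of k G s - 1) := by
      rw [mul_sub, ← map_mul, ← zpow_add_one, sub_add_cancel]; noncomm_ring
    rw [this]; exact sub_mem ih (Ideal.mul_mem_left _ _ hs)

theorem ker_lift_one_eq_span_of_zpowers_eq_top [Group G] {s : G}
    (hs : Subgroup.zpowers s = ⊤) :
    RingHom.ker (lift k k G 1) = Ideal.span {of k G s - 1} := by
  refine le_antisymm (ker_lift_one_le_span_of_sub_one.trans (Ideal.span_le.2 ?_)) ?_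
  · rintro _ ⟨g, rfl⟩
    obtain ⟨m, rfl⟩ := Subgroup.mem_zpowers_iff.1 (hs ▸ Subgroup.mem_top g)
    exact of_zpow_sub_one_mem_span s m
  · simp [Ideal.span_le, RingHom.mem_ker]

end MonoidAlgebra

theorem ZMod.zpowers_ofAdd_one_eq_top (f : ℕ) :
    Subgroup.zpowers (Multiplicative.ofAdd (1 : ZMod f)) = ⊤ := by
  refine eq_top_iff.2 fun g _ => Subgroup.mem_zpowers_iff.2 ?_
  obtain ⟨m, hm⟩ := ZMod.intCast_surjective (Multiplicative.toAdd g)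
  exact ⟨m, by rw [← ofAdd_zsmul, zsmul_one, hm, ofAdd_toAdd]⟩

theorem Ideal.mem_span_singleton_zsmul_iff {R : Type*} [Ring R] (a : ℤ) (g x : R) :
    x ∈ Ideal.span {a • g} ↔ ∃ y ∈ Ideal.span {g}, a • y = x := by
  simp only [Ideal.mem_span_singleton']
  constructor
  · rintro ⟨c, rfl⟩
    exact ⟨c * g, ⟨c, rfl⟩, (mul_smul_comm a c g).symm⟩
  · rintro ⟨_, ⟨c, rfl⟩, rfl⟩
    exact ⟨c, mul_smul_comm a c g⟩

section TensorZMod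
variable {M : Type*} [AddCommGroup M]

theorem tmul_one_zmod_eq_zero_iff (n : ℤ) (m : M) :
    m ⊗ₜ[ℤ] (1 : ZMod n.natAbs) = 0 ↔ ∃ y : M, n • y = m := by
  let e : ZMod n.natAbs ≃ₗ[ℤ] ℤ ⧸ Ideal.span {n} :=
    (Int.quotientSpanEquivZMod n).symm.toAddEquiv.toIntLinearEquiv
  let E := TensorProduct.congr (.refl ℤ M) e ≪≫ₗ tensorQuotEquivQuotSMul M (Ideal.span {n})
  have hE : E (m ⊗ₜ 1) = Submodule.Quotient.mk m := by
    have he : e 1 = Ideal.Quotient.mk _ 1 := map_one (Int.quotientSpanEquivZMod n).symm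
    rw [LinearEquiv.trans_apply, congr_tmul, LinearEquiv.refl_apply, he,
      tensorQuotEquivQuotSMul_tmul_mk, one_smul]
  rw [← E.map_eq_zero_iff, hE, Submodule.Quotient.mk_eq_zero, Submodule.ideal_span_singleton_smul,
    Submodule.mem_smul_pointwise_iff_exists]
  simp

theorem tmul_one_zmod_surjective (n : ℕ) :
    Function.Surjective fun m : M => m ⊗ₜ[ℤ] (1 : ZMod n) := by
  intro z
  induction z using TensorProduct.induction_on with
  | zero => exact ⟨0, zero_tmul _ _⟩
  | tmul m c =>
    obtain ⟨a, rfl⟩ := ZMod.intCast_surjective c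
    exact ⟨a • m, by simp only [smul_tmul, zsmul_one]⟩
  | add x y hx hy =>
    obtain ⟨a, rfl⟩ := hx
    obtain ⟨b, rfl⟩ := hy
    exact ⟨a + b, add_tmul _ _ _⟩

end TensorZMod

theorem augIdeal_eq_span (f : ℕ) : augIdeal f = Ideal.span {bas f 1 - bas f 0} := by
  have hbas_zero : bas f 0 = 1 := map_one (MonoidAlgebra.of ℤ _)
  rw [hbas_zero]
  exact MonoidAlgebra.ker_lift_one_eq_span_of_zpowers_eq_top
    (ZMod.zpowers_ofAdd_one_eq_top f)

theorem augIdeal_quotient_iso_tensor_general (f : ℕ) (xt : ℤ) :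
    Nonempty
      ((augIdeal f ⧸ (Submodule.comap (augIdeal f).subtype
            (Ideal.span {xt • (bas f 1 - bas f 0)})))
        ≃ₗ[MonoidAlgebra ℤ (Multiplicative (ZMod f))]
       ((augIdeal f) ⊗[ℤ] ZMod xt.natAbs)) := by
  let φ : augIdeal f →ₗ[MonoidAlgebra ℤ (Multiplicative (ZMod f))]
      augIdeal f ⊗[ℤ] ZMod xt.natAbs :=
    (AlgebraTensorModule.mk ℤ _ _ _).flip 1
  have hker : LinearMap.ker φ =
      Submodule.comap (augIdeal f).subtype (Ideal.span {xt • (bas f 1 - bas f 0)}) := by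
    ext k
    rw [LinearMap.mem_ker, Submodule.mem_comap, Ideal.mem_span_singleton_zsmul_iff,
      ← augIdeal_eq_span]
    exact (tmul_one_zmod_eq_zero_iff xt k).trans
      ⟨fun ⟨y, hy⟩ => ⟨y, y.2, congrArg Subtype.val hy⟩,
        fun ⟨y, hy, hyk⟩ => ⟨⟨y, hy⟩, Subtype.ext hyk⟩⟩
  exact ⟨Submodule.quotEquivOfEq _ _ hker.symm ≪≫ₗ
    φ.quotKerEquivOfSurjective (tmul_one_zmod_surjective _)⟩

/-- For `x = x̃([1̄] − [0̄])` with `x̃ ≠ 0`, the quotient `K/xR` of the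
augmentation ideal by the ideal `xR` is isomorphic, as a module over `ℤ[ℤ/fℤ]`, to the
tensor product `(ℤ/x̃ℤ) ⊗_ℤ K`, the `ℤ/fℤ`-action being the one induced by the action
on the factor `K`. -/
theorem augIdeal_quotient_iso_tensor (f : ℕ) (hf : 1 < f) (xt : ℤ) (hx : xt ≠ 0) :
    Nonempty
      ((augIdeal f ⧸ (Submodule.comap (augIdeal f).subtype
            (Ideal.span {xt • (bas f 1 - bas f 0)})))
        ≃ₗ[MonoidAlgebra ℤ (Multiplicative (ZMod f))]
       ((augIdeal f) ⊗[ℤ] ZMod xt.natAbs)) :=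
  augIdeal_quotient_iso_tensor_general f xt
end

section
/- Let f ≥ 2 be an even integer and x̃ a nonzero integer. Then the splitting congruence system for (f, x̃) has no solution: there exist no integers ℓ_k (1 ≤ k ≤ f−1) and ℓ_{j,k} (1 ≤ j < k ≤ f−1) satisfying all the congruences (A), (B_k), (C_k), (D_{j,k}). -/
/-- The splitting congruence system for `(f, x̃)`: integers `l k` (`1 ≤ k ≤ f−1`) and
`l2 j k` (`1 ≤ j < k ≤ f−1`) satisfying the congruences (A), (B_k), (C_k), (D_{j,k}). -/
def SplittingSystem (f : ℕ) (x : ℤ) (l : ℕ → ℤ) (l2 : ℕ → ℕ → ℤ) : Prop :=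
  (Int.ModEq (2 * x) (l (f - 1) - l 1) x) ∧
  (∀ k : ℕ, 2 ≤ k → k ≤ f - 1 →
    Int.ModEq (2 * x) (l (k - 1) - l k + l (f - 1) - 2 * l2 (k - 1) (f - 1)) 0) ∧
  (∀ k : ℕ, 2 ≤ k → k ≤ f - 1 →
    Int.ModEq x (l (f - 1) - l2 1 k - l2 (k - 1) (f - 1)) 0) ∧
  (∀ j k : ℕ, 2 ≤ j → j < k → k ≤ f - 1 →
    Int.ModEq x
      (l (f - 1) + l2 (j - 1) (k - 1) - l2 j k - l2 (j - 1) (f - 1) - l2 (k - 1) (f - 1)) 0)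

/-- For even `f ≥ 2` and `x̃ ≠ 0`, the splitting congruence system for
`(f, x̃)` has no solution. -/
theorem splittingSystem_not_solvable_of_even (f : ℕ) (hf : 2 ≤ f) (heven : Even f)
    (x : ℤ) (hx : x ≠ 0) :
    ¬ ∃ l : ℕ → ℤ, ∃ l2 : ℕ → ℕ → ℤ, SplittingSystem f x l l2 := by
  rintro ⟨l, l2, hA, hB, hC, hD⟩
  obtain ⟨h1, rfl⟩ : ∃ h1, f = 2 * h1 + 2 := by
    obtain ⟨c, hc⟩ := heven; exact ⟨c - 1, by omega⟩
  clear heven hf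
  have hm : 2 * h1 + 2 - 1 = 2 * h1 + 1 := rfl
  rw [hm] at hA hB hC hD
  set m : ℕ := 2 * h1 + 1 with hmdef
  rcases Nat.eq_zero_or_pos h1 with h10 | h11
  · -- f = 2 case : A says 2x ∣ x
    subst h10
    have hd : 2 * x ∣ x - (l m - l 1) := hA.dvd
    have hm1 : m = 1 := rfl
    rw [hm1] at hd
    obtain ⟨c, hc⟩ := hd
    have hx0 : x * (2 * c - 1) = 0 := by ring_nf; ring_nf at hc; linarith
    rcases mul_eq_zero.mp hx0 with h | h
    · exact hx h
    · omega
  -- main case : h1 ≥ 1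
  set L : ℤ := l m with hLdef
  set s : ℕ → ℤ := fun i => l2 i m with hsdef
  have htop : ∀ n : ℕ, 1 ≤ n →
      (∑ i ∈ Finset.Ioc 0 n, s i) = (∑ i ∈ Finset.Ioc 0 (n - 1), s i) + s n := by
    intro n hn
    obtain ⟨p, rfl⟩ : ∃ p, n = p + 1 := ⟨n - 1, by omega⟩
    rw [show p + 1 - 1 = p from rfl, Finset.sum_Ioc_succ_top (Nat.zero_le p)]
  -- Lemma Q
  have hQ : ∀ j : ℕ, 1 ≤ j → ∀ k : ℕ, j < k → k ≤ m →
      x ∣ (l2 j k - ((j : ℤ) * L - (∑ i ∈ Finset.Ioc 0 (j - 1), s i)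
        - ∑ i ∈ Finset.Ioc (k - j - 1) (k - 1), s i)) := by
    intro j hj
    induction j, hj using Nat.le_induction with
    | base =>
      intro k hk1 hk2
      obtain ⟨t, rfl⟩ : ∃ t, k = t + 2 := ⟨k - 2, by omega⟩
      have hc := (hC (t + 2) (by omega) (by omega)).dvd
      rw [show t + 2 - 1 = t + 1 from rfl] at hc ⊢
      rw [show (1 : ℕ) - 1 = 0 from rfl]
      rw [show t + 1 - 1 = t from rfl]
      rw [Finset.sum_Ioc_succ_top (Nat.le_refl t)]
      simp only [Finset.Ioc_self, Finset.sum_empty]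
      obtain ⟨c, hc⟩ := hc
      have hs2 : l2 (t + 1) m = s (t + 1) := rfl
      rw [hs2] at hc
      refine ⟨c, ?_⟩
      push_cast
      linarith
    | succ j hj IH =>
      intro k hk1 hk2
      obtain ⟨p, rfl⟩ : ∃ p, j = p + 1 := ⟨j - 1, by omega⟩
      obtain ⟨t, rfl⟩ : ∃ t, k = t + 2 := ⟨k - 2, by omega⟩
      have hd := (hD (p + 2) (t + 2) (by omega) (by omega) (by omega)).dvd
      have hih := IH (t + 1) (by omega) (by omega)
      rw [show p + 2 - 1 = p + 1 from rfl, show t + 2 - 1 = t + 1 from rfl] at hd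
      rw [show p + 1 - 1 = p from rfl] at hih
      have e1 : t + 1 - (p + 1) - 1 = t - p - 1 := by omega
      rw [e1] at hih
      rw [show p + 1 + 1 = p + 2 from rfl, show t + 2 - 1 = t + 1 from rfl,
        show p + 2 - 1 = p + 1 from rfl]
      have e2 : t + 2 - (p + 2) - 1 = t - p - 1 := by omega
      rw [e2]
      rw [Finset.sum_Ioc_succ_top (show (0:ℕ) ≤ p from Nat.zero_le p)]
      rw [Finset.sum_Ioc_succ_top (show t - p - 1 ≤ t by omega)]
      obtain ⟨c, hc⟩ := hd
      obtain ⟨d, hd'⟩ := hih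
      have hs1 : l2 (p + 1) m = s (p + 1) := rfl
      have hs2 : l2 (t + 1) m = s (t + 1) := rfl
      rw [hs1, hs2] at hc
      refine ⟨c + d, ?_⟩
      push_cast
      push_cast at hd'
      linarith
  -- specialize Q at (h1, m) to get x ∣ S - h1 * L
  have hR : x ∣ ((∑ i ∈ Finset.Ioc 0 (2 * h1), s i) - (h1 : ℤ) * L) := by
    have hq := hQ h1 h11 m (by omega) (le_refl m)
    have e1 : m - h1 - 1 = h1 := by omega
    have e2 : m - 1 = 2 * h1 := by omega
    rw [e1, e2] at hq
    have hsplit : (∑ i ∈ Finset.Ioc 0 h1, s i) + (∑ i ∈ Finset.Ioc h1 (2 * h1), s i)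
        = ∑ i ∈ Finset.Ioc 0 (2 * h1), s i :=
      Finset.sum_Ioc_consecutive s (Nat.zero_le h1) (by omega)
    have ht1 := htop h1 h11
    obtain ⟨c, hc⟩ := hq
    have hsm : l2 h1 m = s h1 := rfl
    rw [hsm] at hc
    refine ⟨c, ?_⟩
    linarith
  -- telescoping of B
  have hT : ∀ t : ℕ, 1 ≤ t → t ≤ m →
      2 * x ∣ (l 1 - l t + ((t : ℤ) - 1) * L - 2 * ∑ i ∈ Finset.Ioc 0 (t - 1), s i) := by
    intro t ht
    induction t, ht using Nat.le_induction with
    | base => intro _; simp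
    | succ t ht IH =>
      intro htm
      have hb := (hB (t + 1) (by omega) (by omega)).dvd
      rw [show t + 1 - 1 = t from rfl] at hb ⊢
      have hih := IH (by omega)
      have ht2 := htop t ht
      obtain ⟨c, hc⟩ := hb
      obtain ⟨d, hd'⟩ := hih
      have hst : l2 t m = s t := rfl
      rw [hst] at hc
      refine ⟨d - c, ?_⟩
      rw [ht2]
      push_cast
      linarith
  -- combine everything
  have hAd : 2 * x ∣ (l m - l 1) - x := hA.symm.dvd
  have hTm := hT m (by omega) (le_refl m)
  have e2 : m - 1 = 2 * h1 := by omega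
  rw [e2] at hTm
  obtain ⟨a, ha⟩ := hAd
  obtain ⟨b, hb'⟩ := hTm
  obtain ⟨e, he⟩ := hR
  have hmL : ((m : ℤ)) = 2 * (h1 : ℤ) + 1 := by rw [hmdef]; push_cast; ring
  rw [hmL] at hb'
  have key : x * (2 * a + 2 * b + 2 * e + 1) = 0 := by ring_nf; ring_nf at ha hb' he; linarith
  rcases mul_eq_zero.mp key with h | h
  · exact hx h
  · omega
end

section
/- Let A be an abelian group, M a (possibly non-abelian) multiplicative group, and s : A → M a function for which there is a map c : A × A → M such that s(a+b) = s(a)·s(b)·c(a,b) for all a, b ∈ A, every value c(a,b) is central in M, and c is biadditive (c(a+a′,b) = c(a,b)c(a′,b) and c(a,b+b′) = c(a,b)c(a,b′)). Then for every integer r and every a ∈ A, s(r·a) = s(a)^r · c(a,a)^{r(r−1)/2}. -/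
/-! Writing `z = c(a,a)`, the sequence `t r = s(r • a)` satisfies `t 0 = 1` and
`t (r + 1) = t r * s(a) * z^r`, since `c(r • a, a) = z^r` by additivity in the first argument.
Because `z` commutes with `s(a)`, the closed form `s(a)^r * z^(r(r-1)/2)` satisfies the same
recurrence, and a sequence in a group is determined on all of `ℤ` by its value at `0` and such a
recurrence. -/

theorem map_zsmul_eq_zpow {A M : Type*} [AddGroup A] [Group M] (f : A → M)
    (hf : ∀ x y, f (x + y) = f x * f y) (r : ℤ) (a : A) : f (r • a) = f a ^ r :=
  (MonoidHom.mk' (f ∘ Multiplicative.toAdd) fun x y => hf x.toAdd y.toAdd).map_zpow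
    (Multiplicative.ofAdd a) r

theorem Int.eq_of_zero_eq_of_succ_eq_mul {M : Type*} [Mul M] [IsRightCancelMul M]
    {t u h : ℤ → M} (h0 : t 0 = u 0) (ht : ∀ r, t (r + 1) = t r * h r)
    (hu : ∀ r, u (r + 1) = u r * h r) : t = u := by
  funext r
  induction r using Int.induction_on with
  | zero => exact h0
  | succ n ih => rw [ht, hu, ih]
  | pred n ih =>
    apply mul_right_cancel (b := h (-n - 1))
    rwa [← ht, ← hu, sub_add_cancel]

theorem Commute.zpow_mul_zpow_triangular_succ {M : Type*} [Group M] {g z : M} (hgz : Commute g z)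
    (r : ℤ) :
    g ^ (r + 1) * z ^ ((r + 1) * (r + 1 - 1) / 2) = g ^ r * z ^ (r * (r - 1) / 2) * g * z ^ r := by
  have hexp : (r + 1) * (r + 1 - 1) / 2 = r * (r - 1) / 2 + r := by
    have : (r + 1) * (r + 1 - 1) = r * (r - 1) + 2 * r := by ring
    omega
  rw [hexp, mul_assoc (g ^ r), ← (hgz.zpow_right _).eq]
  group

theorem smul_splitting_formula_general {A M : Type*} [AddCommGroup A] [Group M]
    (s : A → M) (c : A → A → M)
    (hsc : ∀ a b : A, s (a + b) = s a * s b * c a b)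
    (hcent : ∀ a b : A, c a b ∈ Subgroup.center M)
    (hlin_left : ∀ a a' b : A, c (a + a') b = c a b * c a' b) :
    ∀ (r : ℤ) (a : A), s (r • a) = s a ^ r * c a a ^ (r * (r - 1) / 2) := by
  intro r a
  have hc : ∀ (r : ℤ) (b b' : A), c (r • b) b' = c b b' ^ r := fun r b b' =>
    map_zsmul_eq_zpow (c · b') (fun x y => hlin_left x y b') r b
  have hc0 : c 0 0 = 1 := by simpa using hc 0 0 0
  have hs0 : s 0 = 1 := by simpa [hc0] using hsc 0 0
  have hcomm : Commute (s a) (c a a) := Subgroup.mem_center_iff.mp (hcent a a) (s a)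
  refine congrFun (Int.eq_of_zero_eq_of_succ_eq_mul (t := fun r => s (r • a))
    (u := fun r => s a ^ r * c a a ^ (r * (r - 1) / 2)) (h := fun r => s a * c a a ^ r) ?_ ?_
    (fun r => ?_)) r
  · simp [hs0]
  · intro r
    rw [add_smul, one_smul, hsc, hc, mul_assoc]
  · rw [hcomm.zpow_mul_zpow_triangular_succ, mul_assoc _ (s a)]

/-- Let `A` be an abelian group, `M` a (possibly non-abelian) group,
and `s : A → M` a function admitting a central, biadditive cross-effect `c` with
`s(a+b) = s(a)·s(b)·c(a,b)`.  Then for every integer `r` and every `a ∈ A`,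
`s(r·a) = s(a)^r · c(a,a)^{r(r−1)/2}`. -/
theorem smul_splitting_formula {A M : Type*} [AddCommGroup A] [Group M]
    (s : A → M) (c : A → A → M)
    (hsc : ∀ a b : A, s (a + b) = s a * s b * c a b)
    (hcent : ∀ a b : A, c a b ∈ Subgroup.center M)
    (hlin_left : ∀ a a' b : A, c (a + a') b = c a b * c a' b)
    (hlin_right : ∀ a b b' : A, c a (b + b') = c a b * c a b') :
    ∀ (r : ℤ) (a : A), s (r • a) = s a ^ r * c a a ^ (r * (r - 1) / 2) :=
  smul_splitting_formula_general s c hsc hcent hlin_left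
end
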